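/- If h1 : ℝ → ℝ is convex and strictly increasing, h2 : ℕ → ℝ is strictly increasing, and g_i(p) = h1(p) - h2(i), then the inverses f_i = g_i⁻¹ satisfy: for all x > y > g_i(c) and i < j, (f_i(y) - c)/(f_j(y) - c) < (f_i(x) - c)/(f_j(x) - c). -/
import Mathlib


/-- If h1 is convex and strictly increasing, h2 : ℕ → ℝ is strictly
increasing, g_i(p) = h1(p) - h2(i), and f_i is the inverse of g_i, then for all
x > y > g_i(c) and i < j, (f_i(y)-c)/(f_j(y)-c) < (f_i(x)-c)/(f_j(x)-c). -/
theorem stmt_0 (c : ℝ) (h1 : ℝ → ℝ) (h2 : ℕ → ℝ)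
    (hconv : ConvexOn ℝ Set.univ h1) (hmono1 : StrictMono h1) (hmono2 : StrictMono h2)
    (g f : ℕ → ℝ → ℝ)
    (hg : ∀ i p, g i p = h1 p - h2 i)
    (hfg : ∀ i, Function.LeftInverse (f i) (g i))
    (hgf : ∀ i, Function.RightInverse (f i) (g i)) :
    ∀ (i j : ℕ) (x y : ℝ), i < j → g i c < y → y < x →
      (f i y - c) / (f j y - c) < (f i x - c) / (f j x - c) := by
  intro i j x y hij hyc hyx
  have hst : h2 i < h2 j := hmono2 hij
  set a := f i y with ha0
  set b := f i x with hb0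
  set A := f j y with hA0
  set B := f j x with hB0
  have ha : h1 a = y + h2 i := by have := hgf i y; rw [hg] at this; linarith
  have hb : h1 b = x + h2 i := by have := hgf i x; rw [hg] at this; linarith
  have hA : h1 A = y + h2 j := by have := hgf j y; rw [hg] at this; linarith
  have hB : h1 B = x + h2 j := by have := hgf j x; rw [hg] at this; linarith
  have hgc := hg i c
  have hca : c < a := hmono1.lt_iff_lt.mp (by rw [ha]; linarith)
  have haA : a < A := hmono1.lt_iff_lt.mp (by rw [ha, hA]; linarith)
  have hcb : c < b := hmono1.lt_iff_lt.mp (by rw [hb]; linarith)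
  have haB : a < B := hmono1.lt_iff_lt.mp (by rw [ha, hB]; linarith)
  set d : ℝ := x - y with hd0
  set e : ℝ := h2 j - h2 i with he0
  have hd : 0 < d := by rw [hd0]; linarith
  have he : 0 < e := by rw [he0]; linarith
  have hde : 0 < d + e := by linarith
  set l : ℝ := e / (d + e) with hl0
  set m : ℝ := d / (d + e) with hm0
  have hl : 0 < l := div_pos he hde
  have hm : 0 < m := div_pos hd hde
  have hsum : l + m = 1 := by rw [hl0, hm0]; field_simp; ring
  -- convexity applications
  have hcb2 : l * a + m * B ≤ b := by
    have hc1 := hconv.2 (Set.mem_univ a) (Set.mem_univ B) hl.le hm.le hsum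
    simp only [smul_eq_mul] at hc1
    have heq : l * h1 a + m * h1 B = h1 b := by
      rw [ha, hb, hB, hl0, hm0]; field_simp; ring
    exact hmono1.le_iff_le.mp (by linarith)
  have hcA2 : m * a + l * B ≤ A := by
    have hc1 := hconv.2 (Set.mem_univ a) (Set.mem_univ B) hm.le hl.le (by linarith)
    simp only [smul_eq_mul] at hc1
    have heq : m * h1 a + l * h1 B = h1 A := by
      rw [ha, hA, hB, hl0, hm0]; field_simp; ring
    exact hmono1.le_iff_le.mp (by linarith)
  set u : ℝ := a - c with hu0
  set v : ℝ := B - c with hv0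
  have hu : 0 < u := by rw [hu0]; linarith
  have hv : 0 < v := by rw [hv0]; linarith
  have huv : u < v := by rw [hu0, hv0]; linarith
  have hcc : l * c + m * c = c := by rw [← add_mul, hsum, one_mul]
  have hP : l * u + m * v ≤ b - c := by
    have : l * u + m * v = l * a + m * B - (l * c + m * c) := by ring
    rw [this, hcc]; linarith
  have hQ : m * u + l * v ≤ A - c := by
    have : m * u + l * v = m * a + l * B - (m * c + l * c) := by ring
    rw [this]; rw [show m * c + l * c = c by linarith [hcc]]; linarith
  have hPpos : 0 < l * u + m * v := by positivity
  have hQpos : 0 < m * u + l * v := by positivity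
  have hkey : u * v < (b - c) * (A - c) := by
    have h1' : u * v < (l * u + m * v) * (m * u + l * v) := by
      have hid : (l * u + m * v) * (m * u + l * v)
          = l * m * (v - u) ^ 2 + (l + m) ^ 2 * (u * v) := by ring
      have hpos : 0 < l * m * (v - u) ^ 2 :=
        mul_pos (mul_pos hl hm) (pow_pos (by linarith) 2)
      rw [hid, hsum, one_pow, one_mul]; linarith
    have h2' : (l * u + m * v) * (m * u + l * v) ≤ (b - c) * (A - c) :=
      mul_le_mul hP hQ hQpos.le (by linarith)
    linarith
  rw [div_lt_div_iff₀ (by linarith) (by linarith)]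
  exact hkey
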